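/- arXiv:1802.04316 — 7 statements merged into one kernel-verified Lean document; each statement's English description precedes it below -/
import Mathlib

section
/- In an alternative ring R with idempotent e1 and e2 = 1 - e1 (working with the Peirce decomposition R = R11 ⊕ R12 ⊕ R21 ⊕ R22 where Rij = ei R ej), the square of any element of an off-diagonal Peirce component vanishes: if x ∈ Rij with i ≠ j, then x² = 0. -/
/-!
Put `f = 1 - e` and `x = e r f`. The alternative laws, together with their linearizations,
give `e x = x` and `x e = 0`. Then `e (x x) = (e x) x = x x` by right alternativity, while the
linearized left law applied to `e, x, x` reads `(e x) x + (x e) x = e (x x) + x (e x)`,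
that is `x x = x x + x x`. For `x ∈ R₂₁` exchange the roles of `e` and `1 - e`.
-/

/-- Peirce idempotents: `pe e1 0 = e1`, `pe e1 1 = 1 - e1`. -/
def pe {R : Type*} [NonAssocRing R] (e1 : R) : Fin 2 → R := ![e1, 1 - e1]

/-- Membership in the Peirce component `R_{ij} = e_i R e_j`. -/
def InP {R : Type*} [NonAssocRing R] (e1 : R) (i j : Fin 2) (x : R) : Prop :=
  ∃ r : R, x = pe e1 i * r * pe e1 j

def IsLeftAlternative (R : Type*) [Mul R] : Prop :=
  ∀ x y : R, x * x * y = x * (x * y)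

def IsRightAlternative (R : Type*) [Mul R] : Prop :=
  ∀ x y : R, y * x * x = y * (x * x)

section NonUnital

variable {R : Type*} [NonUnitalNonAssocRing R]

theorem IsLeftAlternative.mul_mul_add_mul_mul (hR : IsLeftAlternative R) (a b y : R) :
    a * b * y + b * a * y = a * (b * y) + b * (a * y) := by
  have h := hR (a + b) y
  simp only [add_mul, mul_add, hR a y, hR b y] at h
  rw [← sub_eq_zero] at h ⊢
  rw [← h]
  abel

theorem IsRightAlternative.mul_mul_add_mul_mul (hR : IsRightAlternative R) (y a b : R) :
    y * a * b + y * b * a = y * (a * b) + y * (b * a) := by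
  have h := hR (a + b) y
  simp only [add_mul, mul_add, hR a y, hR b y] at h
  rw [← sub_eq_zero] at h ⊢
  rw [← h]
  abel

theorem mul_self_eq_zero_of_mul_left_eq_self_of_mul_right_eq_zero
    (hL : IsLeftAlternative R) (hR : IsRightAlternative R) {e x : R}
    (hex : e * x = x) (hxe : x * e = 0) : x * x = 0 := by
  have hexx : e * (x * x) = x * x := by rw [← hR x e, hex]
  have h := hL.mul_mul_add_mul_mul e x x
  rw [hex, hxe, zero_mul, add_zero, hexx] at h
  exact right_eq_add.mp h

end NonUnital

section Unital

variable {R : Type*} [NonAssocRing R]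

theorem IsRightAlternative.mul_mul_one_sub_eq_zero (hR : IsRightAlternative R) {e : R}
    (he : IsIdempotentElem e) (r : R) : e * r * e * (1 - e) = 0 := by
  rw [mul_sub, mul_one, hR e, he.eq, sub_self]

theorem mul_mul_one_sub_mul_self_eq_zero (hR : IsRightAlternative R) {e : R}
    (he : IsIdempotentElem e) (r : R) : e * r * (1 - e) * e = 0 := by
  simpa only [he.one_sub_mul_self, he.mul_one_sub_self, mul_zero, add_zero,
    hR.mul_mul_one_sub_eq_zero he] using hR.mul_mul_add_mul_mul (e * r) (1 - e) e

theorem mul_mul_mul_one_sub_eq_self (hL : IsLeftAlternative R) (hR : IsRightAlternative R)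
    {e : R} (he : IsIdempotentElem e) (r : R) : e * (e * r * (1 - e)) = e * r * (1 - e) := by
  have hee : e * (e * r) = e * r := by rw [← hL, he.eq]
  simpa only [hee, he.mul_one_sub_self, hR.mul_mul_one_sub_eq_zero he, mul_zero, add_zero]
    using (hL.mul_mul_add_mul_mul e (e * r) (1 - e)).symm

theorem mul_self_mul_mul_one_sub_eq_zero (hL : IsLeftAlternative R) (hR : IsRightAlternative R)
    {e : R} (he : IsIdempotentElem e) (r : R) :
    e * r * (1 - e) * (e * r * (1 - e)) = 0 :=
  mul_self_eq_zero_of_mul_left_eq_self_of_mul_right_eq_zero hL hR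
    (mul_mul_mul_one_sub_eq_self hL hR he r) (mul_mul_one_sub_mul_self_eq_zero hR he r)

end Unital

theorem offdiag_peirce_sq_zero_general (R : Type*) [NonAssocRing R]
    (hAlt1 : ∀ x y : R, x * x * y = x * (x * y))
    (hAlt2 : ∀ x y : R, y * x * x = y * (x * x))
    (e1 : R) (he : e1 * e1 = e1)
    (i j : Fin 2) (hij : i ≠ j) (x : R) (hx : InP e1 i j x) :
    x * x = 0 := by
  obtain ⟨r, rfl⟩ := hx
  fin_cases i <;> fin_cases j
  · exact absurd rfl hij
  · exact mul_self_mul_mul_one_sub_eq_zero hAlt1 hAlt2 he r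
  · show (1 - e1) * r * e1 * ((1 - e1) * r * e1) = 0
    simpa only [sub_sub_cancel] using
      mul_self_mul_mul_one_sub_eq_zero hAlt1 hAlt2 (IsIdempotentElem.one_sub he) r
  · exact absurd rfl hij

/-- In a unital alternative ring with nontrivial idempotent e1, any
element of an off-diagonal Peirce component squares to zero. -/
theorem offdiag_peirce_sq_zero (R : Type*) [NonAssocRing R]
    (hAlt1 : ∀ x y : R, x * x * y = x * (x * y))
    (hAlt2 : ∀ x y : R, y * x * x = y * (x * x))
    (e1 : R) (he : e1 * e1 = e1) (he0 : e1 ≠ 0) (he1 : e1 ≠ 1)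
    (i j : Fin 2) (hij : i ≠ j) (x : R) (hx : InP e1 i j x) :
    x * x = 0 :=
  offdiag_peirce_sq_zero_general R hAlt1 hAlt2 e1 he i j hij x hx
end

section
/- Let R be a 2,3-torsion free alternative ring with nontrivial idempotent e1, e2 = 1 - e1, satisfying: (1) x12 R21 = 0 implies x12 = 0 and x21 R12 = 0 implies x21 = 0; (2) x11 R12 = 0 or R21 x11 = 0 implies x11 = 0; (3) R12 x22 = 0 or x22 R21 = 0 implies x22 = 0. If a11 ∈ R11, a22 ∈ R22 and [a11 + a22, x] = 0 for all x ∈ R12, then a11 + a22 lies in the center Z(R). -/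
/-- Condition (1): `x_{ij} R_{ji} = 0 ⟹ x_{ij} = 0` for `i ≠ j`. -/
def Cond1 {R : Type*} [NonAssocRing R] (e1 : R) : Prop :=
  ∀ i j : Fin 2, i ≠ j → ∀ x : R, InP e1 i j x →
    (∀ y : R, InP e1 j i y → x * y = 0) → x = 0

/-- Condition (2): `x_{11} R_{12} = 0` or `R_{21} x_{11} = 0` implies `x_{11} = 0`. -/
def Cond2 {R : Type*} [NonAssocRing R] (e1 : R) : Prop :=
  ∀ x : R, InP e1 0 0 x →
    ((∀ y : R, InP e1 0 1 y → x * y = 0) ∨ (∀ y : R, InP e1 1 0 y → y * x = 0)) → x = 0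

/-- Condition (3): `R_{12} x_{22} = 0` or `x_{22} R_{21} = 0` implies `x_{22} = 0`. -/
def Cond3 {R : Type*} [NonAssocRing R] (e1 : R) : Prop :=
  ∀ x : R, InP e1 1 1 x →
    ((∀ y : R, InP e1 0 1 y → y * x = 0) ∨ (∀ y : R, InP e1 1 0 y → x * y = 0)) → x = 0

/-! In an alternative ring an idempotent `e` acts on products of Peirce elements by a rule read
off from the alternating associator: if `e x = α x`, `x e = β x`, `e y = γ y`, `y e = δ y`, then
`e (x y) = (α + β - γ) (x y)` and `(x y) e = (δ + γ - β) (x y)`. An eigenvalue `-1` or `2` of an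
idempotent forces `2 w = 0`, so without 2-torsion this yields every Peirce multiplication rule.

Put `a = a₁₁ + a₂₂`; the hypothesis says `a₁₁ m = m a₂₂` on `R₁₂`. The elements `[a₁₁, r₁₁]`,
`[a₂₂, u₂₂]` and `a₂₂ t₂₁ - t₂₁ a₁₁` lie in Peirce spaces and are annihilated by `R₁₂` on the
side named in conditions (2), (3), (1): in the first two cases all associators met along the way
vanish by the Peirce rules, in the third the product equals both `2 (t, m, a₂₂)` and
`3 (t, m, a₂₂)`. Hence `a` commutes with every Peirce space and so with `R`, and the identity
`[x y, z] = x [y, z] + [x, z] y + 3 (x, y, z)` puts it in the nucleus. -/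

class IsAlternative (R : Type*) [NonAssocRing R] : Prop where
  mul_self_mul (x y : R) : x * x * y = x * (x * y)
  mul_mul_self (x y : R) : y * x * x = y * (x * x)

theorem associator_eq_zero_iff {R : Type*} [NonUnitalNonAssocRing R] {x y z : R} :
    associator x y z = 0 ↔ x * y * z = x * (y * z) :=
  sub_eq_zero

namespace IsAlternative

variable {R : Type*} [NonAssocRing R] [IsAlternative R]

theorem associator_self_left (x y : R) : associator x x y = 0 :=
  associator_eq_zero_iff.mpr (mul_self_mul x y)

theorem associator_self_right (x y : R) : associator y x x = 0 :=
  associator_eq_zero_iff.mpr (mul_mul_self x y)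

theorem associator_swap_left (x y z : R) : associator y x z = -associator x y z := by
  have h := associator_self_left (x + y) z
  have hx := associator_self_left x z
  have hy := associator_self_left y z
  simp only [associator_apply, add_mul, mul_add] at h hx hy ⊢
  linear_combination (norm := abel1) h - hx - hy

theorem associator_swap_right (x y z : R) : associator x z y = -associator x y z := by
  have h := associator_self_right (y + z) x
  have hy := associator_self_right y x
  have hz := associator_self_right z x
  simp only [associator_apply, add_mul, mul_add] at h hy hz ⊢
  linear_combination (norm := abel1) h - hy - hz

theorem associator_cyclic (x y z : R) : associator y z x = associator x y z := by
  rw [associator_swap_right, associator_swap_left, neg_neg]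

theorem associator_flexible (x y : R) : associator x y x = 0 := by
  rw [associator_swap_right, associator_self_left, neg_zero]

theorem mul_comm_mul_eq (x y z : R) :
    x * y * z - z * (x * y) =
      x * (y * z - z * y) + (x * z - z * x) * y + 3 • associator x y z := by
  have h1 := associator_cyclic z x y
  have h2 := associator_swap_right x y z
  simp only [associator_apply, mul_sub, sub_mul] at h1 h2 ⊢
  linear_combination (norm := abel1) -h1 - h2

theorem mem_center_of_forall_commute (h3 : ∀ x : R, (3 : ℕ) • x = 0 → x = 0) {z : R}
    (hz : ∀ x, Commute z x) : z ∈ Set.center R := by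
  have hnuc : ∀ x y, associator x y z = 0 := fun x y => h3 _ <| by
    have h := mul_comm_mul_eq x y z
    rwa [(hz (x * y)).eq, sub_self, (hz y).eq, (hz x).eq, sub_self, sub_self, mul_zero, zero_mul,
      zero_add, zero_add, eq_comm] at h
  refine ⟨hz, fun x y => ?_, fun x y => associator_eq_zero_iff.mp (hnuc x y)⟩
  exact (associator_eq_zero_iff.mp ((associator_cyclic z x y).symm.trans (hnuc x y))).symm

theorem mul_mul_eq_smul_mul {e x y : R} {α β γ : ℤ} (hx : e * x = α • x)
    (hxe : x * e = β • x) (hy : e * y = γ • y) : e * (x * y) = (α + β - γ) • (x * y) := by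
  have h := associator_swap_left e x y
  simp only [associator_apply, hx, hxe, hy, smul_mul_assoc, mul_smul_comm] at h
  linear_combination (norm := module) -h

theorem mul_mul_mul_eq_smul_mul {e x y : R} {β γ δ : ℤ} (hxe : x * e = β • x)
    (hy : e * y = γ • y) (hye : y * e = δ • y) : x * y * e = (δ + γ - β) • (x * y) := by
  have h := associator_swap_right x y e
  simp only [associator_apply, hxe, hy, hye, smul_mul_assoc, mul_smul_comm] at h
  linear_combination (norm := module) h

theorem eq_zero_of_mul_eq_smul (h2 : ∀ x : R, (2 : ℕ) • x = 0 → x = 0) {e w : R}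
    (he : IsIdempotentElem e) {c : ℤ} (hw : e * w = c • w) (hc : c = -1 ∨ c = 2) : w = 0 := by
  have h := mul_self_mul e w
  rw [he.eq, hw, mul_smul_comm, hw, smul_smul] at h
  have hc2 : c * c - c = 2 := by rcases hc with rfl | rfl <;> norm_num
  apply h2
  rw [← natCast_zsmul, Nat.cast_ofNat, ← hc2, sub_smul, ← h, sub_self]

theorem eq_zero_of_mul_eq_smul' (h2 : ∀ x : R, (2 : ℕ) • x = 0 → x = 0) {e w : R}
    (he : IsIdempotentElem e) {c : ℤ} (hw : w * e = c • w) (hc : c = -1 ∨ c = 2) : w = 0 := by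
  have h := mul_mul_self e w
  rw [he.eq, hw, smul_mul_assoc, hw, smul_smul] at h
  have hc2 : c * c - c = 2 := by rcases hc with rfl | rfl <;> norm_num
  apply h2
  rw [← natCast_zsmul, Nat.cast_ofNat, ← hc2, sub_smul, h, sub_self]

end IsAlternative

def peirceWeight (i : Fin 2) : ℤ := 1 - (i : ℕ)

section Peirce

variable {R : Type*} [NonAssocRing R] {e : R}

theorem isIdempotentElem_pe (he : IsIdempotentElem e) (i : Fin 2) : IsIdempotentElem (pe e i) := by
  fin_cases i
  exacts [he, he.one_sub]

theorem sum_pe : ∑ i, pe e i = 1 := by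
  simp [Fin.sum_univ_two, pe]

theorem pe_mul_eq_self_iff (i : Fin 2) (x : R) :
    pe e i * x = x ↔ e * x = peirceWeight i • x := by
  fin_cases i <;> simp [pe, peirceWeight, sub_mul]

theorem mul_pe_eq_self_iff (i : Fin 2) (x : R) :
    x * pe e i = x ↔ x * e = peirceWeight i • x := by
  fin_cases i <;> simp [pe, peirceWeight, mul_sub]

theorem InP.sub {i j : Fin 2} {x y : R} (hx : InP e i j x) (hy : InP e i j y) :
    InP e i j (x - y) := by
  obtain ⟨r, rfl⟩ := hx
  obtain ⟨s, rfl⟩ := hy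
  exact ⟨r - s, by rw [mul_sub, sub_mul]⟩

theorem commute_of_forall_inP {z : R} (hz : ∀ i j x, InP e i j x → Commute z x) (x : R) :
    Commute z x := by
  have hx : x = ∑ i, ∑ j, pe e i * x * pe e j := by
    simp_rw [← Finset.mul_sum, ← Finset.sum_mul, sum_pe, one_mul, mul_one]
  rw [hx]
  exact Commute.sum_right _ _ _ fun i _ => Commute.sum_right _ _ _ fun j _ => hz i j _ ⟨x, rfl⟩

variable [IsAlternative R]
open IsAlternative

theorem associator_pe (i j : Fin 2) (r : R) : associator (pe e i) r (pe e j) = 0 := by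
  have h := associator_flexible e r
  rw [associator_apply] at h
  fin_cases i <;> fin_cases j <;>
    simp only [pe, Fin.zero_eta, Fin.mk_one, Fin.isValue, Matrix.cons_val_zero, Matrix.cons_val_one,
      Matrix.cons_val_fin_one, associator_apply, mul_sub, sub_mul, mul_one, one_mul,
      sub_sub_sub_cancel_left]
  · exact h
  · linear_combination (norm := abel1) -h
  · linear_combination (norm := abel1) -h
  · linear_combination (norm := abel1) h

theorem inP_iff (he : IsIdempotentElem e) {i j : Fin 2} {x : R} :
    InP e i j x ↔ pe e i * x = x ∧ x * pe e j = x := by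
  refine ⟨?_, fun ⟨hi, hj⟩ => ⟨x, by rw [hi, hj]⟩⟩
  rintro ⟨r, rfl⟩
  constructor
  · rw [associator_eq_zero_iff.mp (associator_pe i j r), ← mul_self_mul,
      (isIdempotentElem_pe he i).eq]
  · rw [mul_mul_self, (isIdempotentElem_pe he j).eq]

theorem inP_iff_smul (he : IsIdempotentElem e) {i j : Fin 2} {x : R} :
    InP e i j x ↔ e * x = peirceWeight i • x ∧ x * e = peirceWeight j • x := by
  rw [inP_iff he, pe_mul_eq_self_iff, mul_pe_eq_self_iff]

theorem InP.mul_mem (he : IsIdempotentElem e) {i j k : Fin 2} {x y : R} (hx : InP e i j x)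
    (hy : InP e j k y) : InP e i k (x * y) := by
  rw [inP_iff_smul he] at hx hy ⊢
  constructor
  · rw [mul_mul_eq_smul_mul hx.1 hx.2 hy.1, add_sub_cancel_right]
  · rw [mul_mul_mul_eq_smul_mul hx.2 hy.1 hy.2, add_sub_cancel_right]

/-- `hne` excludes `R_{ij} R_{ij}` with `i ≠ j`, which lands in `R_{ji}` rather than vanishing. -/
theorem InP.mul_eq_zero (he : IsIdempotentElem e) (h2 : ∀ x : R, (2 : ℕ) • x = 0 → x = 0)
    {i j k l : Fin 2} {x y : R} (hx : InP e i j x) (hy : InP e k l y) (hjk : j ≠ k := by decide)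
    (hne : i ≠ k ∨ j ≠ l := by decide) : x * y = 0 := by
  rw [inP_iff_smul he] at hx hy
  have hw : (peirceWeight i + peirceWeight j - peirceWeight k = -1 ∨
      peirceWeight i + peirceWeight j - peirceWeight k = 2) ∨
      (peirceWeight l + peirceWeight k - peirceWeight j = -1 ∨
      peirceWeight l + peirceWeight k - peirceWeight j = 2) := by
    simp only [peirceWeight]
    omega
  rcases hw with hc | hd
  · exact eq_zero_of_mul_eq_smul h2 he (mul_mul_eq_smul_mul hx.1 hx.2 hy.1) hc
  · exact eq_zero_of_mul_eq_smul' h2 he (mul_mul_mul_eq_smul_mul hx.2 hy.1 hy.2) hd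

end Peirce

section Centrality

variable {R : Type*} [NonAssocRing R] [IsAlternative R] {e a b : R}
open IsAlternative

theorem commute_of_inP_zero_zero (he : IsIdempotentElem e)
    (h2 : ∀ x : R, (2 : ℕ) • x = 0 → x = 0) (hc2 : Cond2 e) (ha : InP e 0 0 a)
    (hb : InP e 1 1 b) (hab : ∀ m, InP e 0 1 m → a * m = m * b) {r : R} (hr : InP e 0 0 r) :
    Commute a r := by
  refine sub_eq_zero.mp <| hc2 _ ((ha.mul_mem he hr).sub (hr.mul_mem he ha)) <| .inl fun y hy => ?_
  have hry : InP e 0 1 (r * y) := hr.mul_mem he hy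
  have har : associator a r y = 0 := by
    rw [associator_cyclic y a r, associator_apply, hy.mul_eq_zero he h2 ha,
      hy.mul_eq_zero he h2 (ha.mul_mem he hr), zero_mul, sub_zero]
  have hra : associator r a y = 0 := by rw [associator_swap_left, har, neg_zero]
  have hrb : associator r y b = 0 := by
    rw [associator_cyclic b r y, associator_apply, hb.mul_eq_zero he h2 hr,
      hb.mul_eq_zero he h2 hry, zero_mul, sub_zero]
  rw [associator_eq_zero_iff] at har hra hrb
  rw [sub_mul, har, hra, hab _ hry, hab _ hy, hrb, sub_self]

theorem commute_of_inP_one_one (he : IsIdempotentElem e)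
    (h2 : ∀ x : R, (2 : ℕ) • x = 0 → x = 0) (hc3 : Cond3 e) (ha : InP e 0 0 a)
    (hb : InP e 1 1 b) (hab : ∀ m, InP e 0 1 m → a * m = m * b) {u : R} (hu : InP e 1 1 u) :
    Commute b u := by
  refine sub_eq_zero.mp <| hc3 _ ((hb.mul_mem he hu).sub (hu.mul_mem he hb)) <| .inl fun m hm => ?_
  have hmu : InP e 0 1 (m * u) := hm.mul_mem he hu
  have hmb : associator m b u = 0 := by
    rw [← associator_cyclic m b u, associator_apply, (hb.mul_mem he hu).mul_eq_zero he h2 hm,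
      hu.mul_eq_zero he h2 hm, mul_zero, sub_zero]
  have hmu' : associator m u b = 0 := by rw [associator_swap_right, hmb, neg_zero]
  have ham : associator a m u = 0 := by
    rw [associator_cyclic u a m, associator_apply, hu.mul_eq_zero he h2 ha,
      hu.mul_eq_zero he h2 (ha.mul_mem he hm), zero_mul, sub_zero]
  rw [associator_eq_zero_iff] at hmb hmu' ham
  rw [mul_sub, ← hmb, ← hmu', ← hab _ hm, ← hab _ hmu, ham, sub_self]

theorem mul_eq_mul_of_inP_one_zero (he : IsIdempotentElem e)
    (h2 : ∀ x : R, (2 : ℕ) • x = 0 → x = 0) (hc1 : Cond1 e) (ha : InP e 0 0 a)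
    (hb : InP e 1 1 b) (hab : ∀ m, InP e 0 1 m → a * m = m * b)
    (hbR22 : ∀ u, InP e 1 1 u → Commute b u) {t : R} (ht : InP e 1 0 t) : b * t = t * a := by
  refine sub_eq_zero.mp <| hc1 1 0 (by decide) _ ((hb.mul_mem he ht).sub (ht.mul_mem he ha))
    fun m hm => ?_
  have htm : InP e 1 1 (t * m) := ht.mul_mem he hm
  have hta : associator t a m = 0 := by
    rw [associator_swap_right, ← associator_cyclic t m a, associator_apply,
      hm.mul_eq_zero he h2 ha, ha.mul_eq_zero he h2 ht, zero_mul, mul_zero, sub_zero, neg_zero]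
  have htam : t * a * m = t * (m * b) := by rw [associator_eq_zero_iff.mp hta, hab _ hm]
  have eq_two_smul : (b * t - t * a) * m = 2 • associator t m b := by
    have hbt := (associator_cyclic b t m).symm
    have hbtm := (hbR22 _ htm).eq
    simp only [associator_apply] at hbt ⊢
    rw [two_nsmul, sub_mul, htam]
    linear_combination (norm := abel1) hbt + hbtm
  have eq_three_smul : (b * t - t * a) * m = 3 • associator t m b := by
    have h := mul_comm_mul_eq t m b
    rw [(hbR22 _ htm).eq, sub_self, hb.mul_eq_zero he h2 hm, ht.mul_eq_zero he h2 hb] at h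
    simp only [mul_sub, sub_mul, mul_zero, zero_mul] at h
    rw [sub_mul, htam]
    linear_combination (norm := abel1) h
  have hA : associator t m b = 0 := by
    have h := eq_two_smul.symm.trans eq_three_smul
    rwa [show (3 : ℕ) = 2 + 1 from rfl, add_nsmul, one_nsmul, left_eq_add] at h
  rw [eq_two_smul, hA, smul_zero]

theorem commute_add_of_inP (he : IsIdempotentElem e) (h2 : ∀ x : R, (2 : ℕ) • x = 0 → x = 0)
    (ha : InP e 0 0 a) (hb : InP e 1 1 b) (haR11 : ∀ r, InP e 0 0 r → Commute a r)
    (hab : ∀ m, InP e 0 1 m → a * m = m * b) (hba : ∀ t, InP e 1 0 t → b * t = t * a)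
    (hbR22 : ∀ u, InP e 1 1 u → Commute b u) {i j : Fin 2} {x : R} (hx : InP e i j x) :
    Commute (a + b) x := by
  unfold Commute SemiconjBy
  rw [add_mul, mul_add]
  fin_cases i <;> fin_cases j
  · rw [hb.mul_eq_zero he h2 hx, hx.mul_eq_zero he h2 hb, (haR11 x hx).eq]
  · rw [hb.mul_eq_zero he h2 hx, hx.mul_eq_zero he h2 ha, hab x hx, add_zero, zero_add]
  · rw [ha.mul_eq_zero he h2 hx, hx.mul_eq_zero he h2 hb, hba x hx, add_zero, zero_add]
  · rw [ha.mul_eq_zero he h2 hx, hx.mul_eq_zero he h2 ha, (hbR22 x hx).eq]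

end Centrality

theorem central_of_comm_R12_general (R : Type*) [NonAssocRing R]
    (hAlt1 : ∀ x y : R, x * x * y = x * (x * y))
    (hAlt2 : ∀ x y : R, y * x * x = y * (x * x))
    (h2 : ∀ x : R, (2 : ℕ) • x = 0 → x = 0)
    (h3 : ∀ x : R, (3 : ℕ) • x = 0 → x = 0)
    (e1 : R) (he : e1 * e1 = e1)
    (hc1 : Cond1 e1) (hc2 : Cond2 e1) (hc3 : Cond3 e1)
    (a11 a22 : R) (ha11 : InP e1 0 0 a11) (ha22 : InP e1 1 1 a22)
    (hcomm : ∀ x : R, InP e1 0 1 x → (a11 + a22) * x - x * (a11 + a22) = 0) :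
    a11 + a22 ∈ Set.center R := by
  have : IsAlternative R := ⟨hAlt1, hAlt2⟩
  have hab : ∀ m, InP e1 0 1 m → a11 * m = m * a22 := fun m hm => by
    have h := hcomm m hm
    rwa [add_mul, mul_add, ha22.mul_eq_zero he h2 hm, hm.mul_eq_zero he h2 ha11, add_zero,
      zero_add, sub_eq_zero] at h
  have haR11 := fun r => commute_of_inP_zero_zero he h2 hc2 ha11 ha22 hab (r := r)
  have hbR22 := fun u => commute_of_inP_one_one he h2 hc3 ha11 ha22 hab (u := u)
  have hba := fun t => mul_eq_mul_of_inP_one_zero he h2 hc1 ha11 ha22 hab hbR22 (t := t)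
  exact IsAlternative.mem_center_of_forall_commute h3 <| commute_of_forall_inP fun _ _ _ =>
    commute_add_of_inP he h2 ha11 ha22 haR11 hab hba hbR22

/-- if $[a_{11}+a_{22}, R_{12}] = 0$ then $a_{11}+a_{22}$ is central. -/
theorem central_of_comm_R12 (R : Type*) [NonAssocRing R]
    (hAlt1 : ∀ x y : R, x * x * y = x * (x * y))
    (hAlt2 : ∀ x y : R, y * x * x = y * (x * x))
    (h2 : ∀ x : R, (2 : ℕ) • x = 0 → x = 0)
    (h3 : ∀ x : R, (3 : ℕ) • x = 0 → x = 0)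
    (e1 : R) (he : e1 * e1 = e1) (he0 : e1 ≠ 0) (he1 : e1 ≠ 1)
    (hc1 : Cond1 e1) (hc2 : Cond2 e1) (hc3 : Cond3 e1)
    (a11 a22 : R) (ha11 : InP e1 0 0 a11) (ha22 : InP e1 1 1 a22)
    (hcomm : ∀ x : R, InP e1 0 1 x → (a11 + a22) * x - x * (a11 + a22) = 0) :
    a11 + a22 ∈ Set.center R :=
  central_of_comm_R12_general R hAlt1 hAlt2 h2 h3 e1 he hc1 hc2 hc3 a11 a22 ha11 ha22 hcomm
end

section
/- Let R be a 2,3-torsion free unital alternative ring with nontrivial idempotent e1 satisfying conditions (1)-(3), and D a Lie multiplicative derivation with D(e1) ∈ Z(R) and e2 D(R11) e2 ⊆ Z(R)e2. Then D(R11) ⊆ R11 + Z(R). -/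
/-- under conditions (1)-(3), with D(e1) central and
e2 D(R11) e2 ⊆ Z(R) e2, one has D(R11) ⊆ R11 + Z(R). -/
theorem D_R11_sub (R : Type*) [NonAssocRing R]
    (hAlt1 : ∀ x y : R, x * x * y = x * (x * y))
    (hAlt2 : ∀ x y : R, y * x * x = y * (x * x))
    (h2 : ∀ x : R, (2 : ℕ) • x = 0 → x = 0)
    (h3 : ∀ x : R, (3 : ℕ) • x = 0 → x = 0)
    (e1 : R) (he : e1 * e1 = e1) (he0 : e1 ≠ 0) (he1 : e1 ≠ 1)
    (hc1 : Cond1 e1) (hc2 : Cond2 e1) (hc3 : Cond3 e1)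
    (D : R → R)
    (hD : ∀ x y : R, D (x * y - y * x) =
      (D x * y - y * D x) + (x * D y - D y * x))
    (h1 : D e1 ∈ Set.center R)
    (ha : ∀ x : R, InP e1 0 0 x →
      ∃ z ∈ Set.center R, (1 - e1) * D x * (1 - e1) = z * (1 - e1)) :
    ∀ x : R, InP e1 0 0 x →
      ∃ b z : R, InP e1 0 0 b ∧ z ∈ Set.center R ∧ D x = b + z := by
  -- flexible law: a * b * a = a * (b * a)
  have flex : ∀ a b : R, a * b * a = a * (b * a) := by
    intro a b
    have e := hAlt1 (a + b) a
    have e1' := hAlt1 a a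
    have e2' := hAlt1 b a
    have e3' := hAlt2 a b
    simp only [add_mul, mul_add] at e
    rw [e1', e2', e3'] at e
    rw [← sub_eq_zero] at e ⊢
    abel_nf at e ⊢
    exact e
  have hpe : pe e1 0 = e1 := by simp [pe]
  intro x hx
  obtain ⟨r, rfl⟩ := hx
  rw [hpe]
  -- e1 * x = x and x * e1 = x
  have he1r : e1 * (e1 * r) = e1 * r := by
    have := hAlt1 e1 r; rw [he] at this; exact this.symm
  have hx1 : e1 * (e1 * r * e1) = e1 * r * e1 := by
    rw [← flex e1 (e1 * r), he1r]
  have hx2 : e1 * r * e1 * e1 = e1 * r * e1 := by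
    have := hAlt2 e1 (e1 * r); rw [he] at this; exact this
  have hD0 : D 0 = 0 := by
    have := hD 0 0; simpa using this
  set d := D (e1 * r * e1) with hd
  -- e1 * d = d * e1
  have hcomm : e1 * d = d * e1 := by
    have h := hD e1 (e1 * r * e1)
    rw [hx1, hx2, sub_self, hD0, h1.comm, sub_self, zero_add] at h
    exact sub_eq_zero.mp h.symm
  have hde : e1 * d * e1 = e1 * d := by
    rw [hcomm, hAlt2 e1 d, he, ← hcomm]
  obtain ⟨z, hz, hze⟩ := ha (e1 * r * e1) ⟨r, by rw [hpe]⟩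
  rw [← hd] at hze
  -- decomposition
  have key : d = e1 * d * e1 + (1 - e1) * d * (1 - e1) := by
    have expand : (1 - e1) * d * (1 - e1)
        = d - d * e1 - (e1 * d - e1 * d * e1) := by
      simp only [sub_mul, mul_sub, one_mul, mul_one]
      rw [hcomm]
    rw [expand, hde, hcomm]
    abel
  have hze1 : e1 * z * e1 = z * e1 := by
    rw [← hz.comm e1, ← hz.left_assoc, he]
  refine ⟨e1 * (d - z) * e1, z, ⟨d - z, by rw [hpe]⟩, hz, ?_⟩
  conv_lhs => rw [key, hze]
  simp only [mul_sub, sub_mul, mul_one, hze1]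
  abel
end

section
/- In the setting of the decomposition D = δ + τ: if b11, b'11 ∈ R11 and z, z' ∈ Z(R) with b11 + z = b'11 + z', and R satisfies conditions (2) and (3), then b11 = b'11 and z = z'. (Uniqueness of the R_ii-plus-center decomposition.) -/
/-- uniqueness of the R11-plus-center decomposition. -/
theorem R11_center_decomp_unique (R : Type*) [NonAssocRing R]
    (hAlt1 : ∀ x y : R, x * x * y = x * (x * y))
    (hAlt2 : ∀ x y : R, y * x * x = y * (x * x))
    (h2 : ∀ x : R, (2 : ℕ) • x = 0 → x = 0)
    (h3 : ∀ x : R, (3 : ℕ) • x = 0 → x = 0)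
    (e1 : R) (he : e1 * e1 = e1) (he0 : e1 ≠ 0) (he1 : e1 ≠ 1)
    (hc2 : Cond2 e1) (hc3 : Cond3 e1)
    (b b' z z' : R) (hb : InP e1 0 0 b) (hb' : InP e1 0 0 b')
    (hz : z ∈ Set.center R) (hz' : z' ∈ Set.center R)
    (heq : b + z = b' + z') :
    b = b' ∧ z = z' := by
  obtain ⟨r, hr⟩ := hb
  obtain ⟨r', hr'⟩ := hb'
  have hz1 := Set.mem_center_iff.mp hz
  have hz2 := Set.mem_center_iff.mp hz'
  simp only [pe, Matrix.cons_val_zero] at hr hr'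
  set c : R := b - b' with hc
  have hcz : c = z' - z := by
    rw [hc, sub_eq_sub_iff_add_eq_add, heq, add_comm]
  -- c * e1 = c
  have hbe : ∀ s : R, (e1 * s * e1) * e1 = e1 * s * e1 := by
    intro s
    rw [hAlt2 e1 (e1 * s), he]
  have hce1 : c * e1 = c := by
    rw [hc, hr, hr', sub_mul, hbe, hbe]
  -- comm and assoc for c
  have hcomm : ∀ a : R, c * a = a * c := by
    intro a
    rw [hcz, sub_mul, mul_sub, hz2.comm, hz1.comm]
  have hright : ∀ a b : R, (a * b) * c = a * (b * c) := by
    intro a b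
    rw [hcz, mul_sub, mul_sub, mul_sub, hz2.right_assoc, hz1.right_assoc]
  have hmid : ∀ a b : R, (a * c) * b = a * (c * b) := by
    intro a b
    rw [hcz, sub_mul, mul_sub, mul_sub, sub_mul, hz2.mid_assoc, hz1.mid_assoc]
  have he2c : (1 - e1) * c = 0 := by
    rw [sub_mul, one_mul, ← hcomm, hce1, sub_self]
  have hc0 : c = 0 := by
    apply hc2 c
    · exact ⟨r - r', by simp only [pe, Matrix.cons_val_zero]; rw [hc, hr, hr', mul_sub, sub_mul]⟩
    · right
      rintro y ⟨s, hs⟩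
      simp only [pe, Matrix.cons_val_zero, Matrix.cons_val_one, Matrix.head_cons] at hs
      rw [hs, hright, ← hcomm e1, hce1, hright, ← hcomm s, ← hmid, he2c, zero_mul]
  constructor
  · exact sub_eq_zero.mp (hc ▸ hc0 : b - b' = 0)
  · exact (sub_eq_zero.mp (hcz ▸ hc0 : z' - z = 0)).symm
end

section
/- Let δ: R → R be the map defined component-wise from a Lie multiplicative derivation D satisfying D(Rij) ⊆ Rij (i≠j), D(Rii) ⊆ Rii + Z(R), and such that D(a+b) - D(a) - D(b) ∈ Z(R) for all a,b. Then δ restricted to R11 is additive: δ(a11 + b11) = δ(a11) + δ(b11) for all a11, b11 ∈ R11. -/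
/-- the component-wise map δ associated with D is additive on R11. -/
theorem delta_additive_on_R11 (R : Type*) [NonAssocRing R]
    (hAlt1 : ∀ x y : R, x * x * y = x * (x * y))
    (hAlt2 : ∀ x y : R, y * x * x = y * (x * x))
    (h2 : ∀ x : R, (2 : ℕ) • x = 0 → x = 0)
    (h3 : ∀ x : R, (3 : ℕ) • x = 0 → x = 0)
    (e1 : R) (he : e1 * e1 = e1) (he0 : e1 ≠ 0) (he1 : e1 ≠ 1)
    (hc1 : Cond1 e1) (hc2 : Cond2 e1) (hc3 : Cond3 e1)
    (D δ : R → R)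
    -- D preserves off-diagonal components and δ agrees with D there
    (hoff : ∀ i j : Fin 2, i ≠ j → ∀ x : R, InP e1 i j x →
      InP e1 i j (D x) ∧ δ x = D x)
    -- on diagonal components, δ x is the R_{ii}-part of D x: D x = δ x + central
    (hdiag : ∀ i : Fin 2, ∀ x : R, InP e1 i i x →
      InP e1 i i (δ x) ∧ D x - δ x ∈ Set.center R)
    -- D is almost additive
    (haa : ∀ a b : R, D (a + b) - D a - D b ∈ Set.center R) :
    ∀ a b : R, InP e1 0 0 a → InP e1 0 0 b → δ (a + b) = δ a + δ b := by
  intro a b ha hb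
  have hab : InP e1 0 0 (a + b) := by
    obtain ⟨r, hr⟩ := ha; obtain ⟨s, hs⟩ := hb
    exact ⟨r + s, by rw [hr, hs, mul_add, add_mul]⟩
  obtain ⟨hδab, hzab⟩ := hdiag 0 (a + b) hab
  obtain ⟨hδa, hza⟩ := hdiag 0 a ha
  obtain ⟨hδb, hzb⟩ := hdiag 0 b hb
  set c := δ (a + b) - δ a - δ b with hc
  have hcP : InP e1 0 0 c := by
    obtain ⟨r, hr⟩ := hδab; obtain ⟨s, hs⟩ := hδa; obtain ⟨t, ht⟩ := hδb
    exact ⟨r - s - t, by rw [hc, hr, hs, ht, mul_sub, mul_sub, sub_mul, sub_mul]⟩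
  have hcZ : c ∈ Set.center R := by
    have : c = (D (a+b) - D a - D b) - (D (a+b) - δ (a+b)) + (D a - δ a) + (D b - δ b) := by
      rw [hc]; abel
    rw [this]
    refine Set.add_mem_center (Set.add_mem_center ?_ hza) hzb
    rw [sub_eq_add_neg]
    exact Set.add_mem_center (haa a b) (Set.neg_mem_center hzab)
  have hce1 : c * e1 = c := by
    obtain ⟨r, hr⟩ := hcP
    have hpe : pe e1 0 = e1 := rfl
    rw [hr, hpe]
    calc e1 * r * e1 * e1 = e1 * r * (e1 * e1) := hAlt2 e1 (e1 * r)
      _ = e1 * r * e1 := by rw [he]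
  have hce2 : c * (1 - e1) = 0 := by
    rw [mul_sub, mul_one, hce1, sub_self]
  have hcen := hcZ
  rw [Set.mem_center_iff] at hcen
  have key : ∀ y : R, InP e1 1 0 y → y * c = 0 := by
    intro y hy
    obtain ⟨s, hs⟩ := hy
    have hpe1 : pe e1 1 = (1 - e1 : R) := by
      show (![e1, 1 - e1] : Fin 2 → R) 1 = 1 - e1
      simp
    have hpe0 : pe e1 0 = e1 := rfl
    rw [hs, hpe1, hpe0]
    have h1 : (1 - e1) * s * e1 * c = c * ((1 - e1) * s * e1) := (hcen.comm _).symm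
    rw [h1]
    have h2' : c * ((1 - e1) * s * e1) = (c * ((1 - e1) * s)) * e1 := hcen.left_assoc _ _
    have h3' : c * ((1 - e1) * s) = (c * (1 - e1)) * s := hcen.left_assoc _ _
    rw [h2', h3', hce2, zero_mul, zero_mul]
  have hc0 : c = 0 := hc2 c hcP (Or.inr key)
  have h0 : δ (a + b) - δ a - δ b = 0 := hc0
  rw [sub_sub, sub_eq_zero] at h0
  exact h0
end

section
/- Let D be a Lie multiplicative derivation of a 2-torsion free alternative ring R with nontrivial idempotent e1 such that D(R12) ⊆ R12. Then for all a12, b12 ∈ R12, D(a12 b12) = D(a12) b12 + a12 D(b12). -/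
section LeibnizHelpers

variable {R : Type*} [NonAssocRing R]

private lemma solve1 {G : Type*} [AddCommGroup G] {A B C D : G} (h : A = B)
    (e : C - D = A - B) : C = D := by
  have h' : C - D = 0 := by rw [e, h, sub_self]
  exact sub_eq_zero.mp h'

/-- Linearization of the left alternative law. -/
private lemma linL (hAlt1 : ∀ x y : R, x * x * y = x * (x * y)) (x z y : R) :
    x * z * y - x * (z * y) + (z * x * y - z * (x * y)) = 0 := by
  have h0 : (x + z) * (x + z) * y - (x + z) * ((x + z) * y) = 0 :=
    sub_eq_zero.mpr (hAlt1 (x + z) y)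
  have hx : x * x * y - x * (x * y) = 0 := sub_eq_zero.mpr (hAlt1 x y)
  have hz : z * z * y - z * (z * y) = 0 := sub_eq_zero.mpr (hAlt1 z y)
  have e : x * z * y - x * (z * y) + (z * x * y - z * (x * y))
      = ((x + z) * (x + z) * y - (x + z) * ((x + z) * y))
        - (x * x * y - x * (x * y)) - (z * z * y - z * (z * y)) := by
    simp only [add_mul, mul_add]; abel
  rw [e, h0, hx, hz]; simp

/-- Linearization of the right alternative law. -/
private lemma linR (hAlt2 : ∀ x y : R, y * x * x = y * (x * x)) (w y z : R) :
    w * y * z - w * (y * z) + (w * z * y - w * (z * y)) = 0 := by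
  have h0 : w * (y + z) * (y + z) - w * ((y + z) * (y + z)) = 0 :=
    sub_eq_zero.mpr (hAlt2 (y + z) w)
  have hy : w * y * y - w * (y * y) = 0 := sub_eq_zero.mpr (hAlt2 y w)
  have hz : w * z * z - w * (z * z) = 0 := sub_eq_zero.mpr (hAlt2 z w)
  have e : w * y * z - w * (y * z) + (w * z * y - w * (z * y))
      = (w * (y + z) * (y + z) - w * ((y + z) * (y + z)))
        - (w * y * y - w * (y * y)) - (w * z * z - w * (z * z)) := by
    simp only [add_mul, mul_add]; abel
  rw [e, h0, hy, hz]; simp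

/-- Flexibility. -/
private lemma flexL (hAlt1 : ∀ x y : R, x * x * y = x * (x * y))
    (hAlt2 : ∀ x y : R, y * x * x = y * (x * x)) (x y : R) :
    x * y * x = x * (y * x) := by
  have h := linL hAlt1 x y x
  rw [hAlt2 x y] at h
  rw [sub_self, add_zero] at h
  exact sub_eq_zero.mp h

private lemma sq0 (hAlt1 : ∀ x y : R, x * x * y = x * (x * y))
    (hAlt2 : ∀ x y : R, y * x * x = y * (x * x)) (e1 x : R)
    (hx1 : e1 * x = x) (hx2 : x * e1 = 0) : x * x = 0 := by
  have h := flexL hAlt1 hAlt2 x e1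
  rw [hx2, hx1, zero_mul] at h
  exact h.symm

private lemma anticommQ (hAlt1 : ∀ x y : R, x * x * y = x * (x * y))
    (hAlt2 : ∀ x y : R, y * x * x = y * (x * x)) (e1 x y : R)
    (hx1 : e1 * x = x) (hx2 : x * e1 = 0)
    (hy1 : e1 * y = y) (hy2 : y * e1 = 0) : y * x = -(x * y) := by
  have hxy1 : e1 * (x + y) = x + y := by rw [mul_add, hx1, hy1]
  have hxy2 : (x + y) * e1 = 0 := by rw [add_mul, hx2, hy2, add_zero]
  have h := sq0 hAlt1 hAlt2 e1 (x + y) hxy1 hxy2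
  have hx := sq0 hAlt1 hAlt2 e1 x hx1 hx2
  have hy := sq0 hAlt1 hAlt2 e1 y hy1 hy2
  have e : x * y + y * x = (x + y) * (x + y) - x * x - y * y := by
    simp only [add_mul, mul_add]; abel
  rw [h, hx, hy] at e
  have e' : x * y + y * x = 0 := by rw [e]; simp
  exact eq_neg_of_add_eq_zero_right e'

private lemma prodQ (hAlt1 : ∀ x y : R, x * x * y = x * (x * y))
    (hAlt2 : ∀ x y : R, y * x * x = y * (x * x)) (e1 x y : R)
    (hx1 : e1 * x = x) (hx2 : x * e1 = 0)
    (hy1 : e1 * y = y) (hy2 : y * e1 = 0) :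
    e1 * (x * y) = 0 ∧ (x * y) * e1 = x * y := by
  constructor
  · have h := linL hAlt1 e1 x y
    rw [hx1, hx2, hy1, zero_mul] at h
    exact solve1 h.symm (by abel)
  · have h := linR hAlt2 x y e1
    rw [hy2, mul_zero, hx2, zero_mul, hy1] at h
    exact solve1 h (by abel)

private lemma memQ (hAlt1 : ∀ x y : R, x * x * y = x * (x * y))
    (hAlt2 : ∀ x y : R, y * x * x = y * (x * x)) (e1 : R) (he : e1 * e1 = e1)
    {x : R} (hx : InP e1 0 1 x) : e1 * x = x ∧ x * e1 = 0 := by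
  obtain ⟨r, hr⟩ := hx
  have hr' : x = e1 * r * (1 - e1) := by simpa [pe] using hr
  have h12 : e1 * (1 - e1) = 0 := by rw [mul_sub, mul_one, he, sub_self]
  have h21 : (1 - e1) * e1 = 0 := by rw [sub_mul, one_mul, he, sub_self]
  have hw : e1 * (e1 * r) = e1 * r := by
    have h := hAlt1 e1 r; rw [he] at h; exact h.symm
  have hwe : e1 * r * e1 * e1 = e1 * r * e1 := by
    have h := hAlt2 e1 (e1 * r); rw [he] at h; exact h
  have hwe2 : e1 * r * e1 * (1 - e1) = 0 := by
    rw [mul_sub, mul_one, hwe, sub_self]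
  have hA := linR hAlt2 (e1 * r) (1 - e1) e1
  rw [h21, mul_zero, hwe2, h12, mul_zero] at hA
  have hA' : e1 * r * (1 - e1) * e1 = 0 := solve1 hA (by abel)
  have hB := linL hAlt1 e1 (e1 * r) (1 - e1)
  rw [hw, hwe2, h12, mul_zero] at hB
  have hB' : e1 * (e1 * r * (1 - e1)) = e1 * r * (1 - e1) := solve1 hB.symm (by abel)
  rw [hr']
  exact ⟨hB', hA'⟩

end LeibnizHelpers

/-- D is a derivation on products of two elements of R12. -/
theorem D_leibniz_R12_R12 (R : Type*) [NonAssocRing R]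
    (hAlt1 : ∀ x y : R, x * x * y = x * (x * y))
    (hAlt2 : ∀ x y : R, y * x * x = y * (x * x))
    (h2 : ∀ x : R, (2 : ℕ) • x = 0 → x = 0)
    (e1 : R) (he : e1 * e1 = e1) (he0 : e1 ≠ 0) (he1 : e1 ≠ 1)
    (D : R → R)
    (hD : ∀ x y : R, D (x * y - y * x) =
      (D x * y - y * D x) + (x * D y - D y * x))
    (hD12 : ∀ x : R, InP e1 0 1 x → InP e1 0 1 (D x)) :
    ∀ a b : R, InP e1 0 1 a → InP e1 0 1 b →
      D (a * b) = D a * b + a * D b := by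
  intro a b ha hb
  obtain ⟨ha1, ha2⟩ := memQ hAlt1 hAlt2 e1 he ha
  obtain ⟨hb1, hb2⟩ := memQ hAlt1 hAlt2 e1 he hb
  obtain ⟨hDa1, hDa2⟩ := memQ hAlt1 hAlt2 e1 he (hD12 a ha)
  obtain ⟨hDb1, hDb2⟩ := memQ hAlt1 hAlt2 e1 he (hD12 b hb)
  -- Peirce facts about c := a*b
  obtain ⟨hc1, hc2⟩ := prodQ hAlt1 hAlt2 e1 a b ha1 ha2 hb1 hb2
  -- anticommutativity facts
  have hba : b * a = -(a * b) := anticommQ hAlt1 hAlt2 e1 a b ha1 ha2 hb1 hb2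
  have hbDa : b * D a = -(D a * b) := anticommQ hAlt1 hAlt2 e1 (D a) b hDa1 hDa2 hb1 hb2
  have hDba : D b * a = -(a * D b) := anticommQ hAlt1 hAlt2 e1 a (D b) ha1 ha2 hDb1 hDb2
  -- the seven instances of hD
  have h1 := hD a b
  have harg1 : a * b - b * a = a * b + a * b := by rw [hba, sub_neg_eq_add]
  rw [harg1, hbDa, hDba] at h1
  have h3 := hD (e1 + a * b) e1
  have harg3 : (e1 + a * b) * e1 - e1 * (e1 + a * b) = a * b := by
    simp only [add_mul, mul_add, he, hc1, hc2]; abel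
  rw [harg3] at h3
  have h4 := hD (e1 + (a * b + a * b)) e1
  have harg4 : (e1 + (a * b + a * b)) * e1 - e1 * (e1 + (a * b + a * b)) = a * b + a * b := by
    simp only [add_mul, mul_add, he, hc1, hc2]; abel
  rw [harg4] at h4
  have h5 := hD (e1 + a * b) (a * b)
  have harg5 : (e1 + a * b) * (a * b) - (a * b) * (e1 + a * b) = -(a * b) := by
    simp only [add_mul, mul_add, hc1, hc2]; abel
  rw [harg5] at h5
  have h6 := hD (e1 + (a * b + a * b)) (a * b)
  have harg6 : (e1 + (a * b + a * b)) * (a * b) - (a * b) * (e1 + (a * b + a * b)) = -(a * b) := by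
    simp only [add_mul, mul_add, hc1, hc2]; abel
  rw [harg6] at h6
  have h5a := hD e1 (a * b)
  have harg5a : e1 * (a * b) - (a * b) * e1 = -(a * b) := by
    rw [hc1, hc2, zero_sub]
  rw [harg5a] at h5a
  have h7 := hD (e1 + (a * b + a * b)) (e1 + a * b)
  have harg7 : (e1 + (a * b + a * b)) * (e1 + a * b)
      - (e1 + a * b) * (e1 + (a * b + a * b)) = a * b := by
    simp only [add_mul, mul_add, he, hc1, hc2]; abel
  rw [harg7] at h7
  -- the magic linear combination: h7 - h4 + h3 + h5 + h5 - h6 - h5a + h1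
  have comb := congrArg₂ (· + ·)
    (congrArg₂ (· - ·)
      (congrArg₂ (· - ·)
        (congrArg₂ (· + ·)
          (congrArg₂ (· + ·)
            (congrArg₂ (· + ·)
              (congrArg₂ (· - ·) h7 h4) h3) h5) h5) h6) h5a) h1
  have d0 := sub_eq_zero.mpr comb
  have key : D (a * b) + D (a * b) = (D a * b + a * D b) + (D a * b + a * D b) := by
    rw [← sub_eq_zero, ← d0]
    simp only [add_mul, mul_add]
    abel
  have key2 : D (a * b) - (D a * b + a * D b) = 0 := by
    refine h2 _ ?_
    have e : (2 : ℕ) • (D (a * b) - (D a * b + a * D b))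
        = (D (a * b) + D (a * b)) - ((D a * b + a * D b) + (D a * b + a * D b)) := by
      rw [two_nsmul]; abel
    rw [e, key, sub_self]
  exact sub_eq_zero.mp key2
end

section
/- Let D be a Lie multiplicative derivation of a 2-torsion free unital alternative ring R with nontrivial idempotent e1 such that D(R12) ⊆ R12 and D(R21) ⊆ R21. Then for all a12 ∈ R12 and b21 ∈ R21: D(a12 (b21 a12)) = D(a12)(b21 a12) + a12 D(b21) a12 + a12 (b21 D(a12)). -/
section Aux
variable {R : Type*} [NonAssocRing R]

lemma lin1' (hAlt1 : ∀ x y : R, x * x * y = x * (x * y)) (x z y : R) :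
    x*z*y + z*x*y = x*(z*y) + z*(x*y) := by
  have h := hAlt1 (x + z) y
  simp only [add_mul, mul_add] at h
  linear_combination (norm := abel1) h - hAlt1 x y - hAlt1 z y

lemma lin2' (hAlt2 : ∀ x y : R, y * x * x = y * (x * x)) (y x z : R) :
    y*x*z + y*z*x = y*(x*z) + y*(z*x) := by
  have h := hAlt2 (x + z) y
  simp only [add_mul, mul_add] at h
  linear_combination (norm := abel1) h - hAlt2 x y - hAlt2 z y

lemma flex' (hAlt1 : ∀ x y : R, x * x * y = x * (x * y))
    (hAlt2 : ∀ x y : R, y * x * x = y * (x * x)) (x y : R) :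
    x*y*x = x*(y*x) := by
  linear_combination (norm := abel1) lin2' hAlt2 x x y - hAlt1 x y

lemma outer' (hAlt1 : ∀ x y : R, x * x * y = x * (x * y))
    (hAlt2 : ∀ x y : R, y * x * x = y * (x * x)) (x y z : R) :
    x*y*z + z*y*x = x*(y*z) + z*(y*x) := by
  linear_combination (norm := abel1) lin2' hAlt2 x y z - lin1' hAlt1 x z y + lin2' hAlt2 z x y

lemma two_cancel' (h2 : ∀ x : R, (2 : ℕ) • x = 0 → x = 0) (w : R) (hw : w + w = 0) :
    w = 0 := h2 w (by rw [two_nsmul]; exact hw)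

lemma mem12_facts' (hAlt1 : ∀ x y : R, x * x * y = x * (x * y))
    (hAlt2 : ∀ x y : R, y * x * x = y * (x * x))
    (e1 : R) (he : e1 * e1 = e1) (x r : R) (hx : x = e1 * r * (1 - e1)) :
    e1*x = x ∧ x*(1-e1) = x ∧ x*e1 = 0 ∧ (1-e1)*x = 0 := by
  have he1e2 : e1*(1-e1) = 0 := by rw [mul_sub, mul_one, he, sub_self]
  have he2e1 : (1-e1)*e1 = 0 := by rw [sub_mul, one_mul, he, sub_self]
  have he2 : (1-e1)*(1-e1) = 1 - e1 := by rw [mul_sub, mul_one, he2e1, sub_zero]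
  have hs : e1 * (e1 * r) = e1 * r := by
    have h := hAlt1 e1 r; rw [he] at h; exact h.symm
  have h2' : x * (1 - e1) = x := by
    rw [hx]
    have h := hAlt2 (1-e1) (e1*r)
    rw [he2] at h
    exact h
  have h1' : e1 * x = x := by
    have hf := flex' hAlt1 hAlt2 e1 (e1 * r)
    rw [hs] at hf
    rw [hx, mul_sub, mul_one, mul_sub, hs, ← hf]
  have h3' : x * e1 = 0 := by
    have h := h2'
    rw [mul_sub, mul_one] at h
    linear_combination (norm := abel1) -h
  have h4' : (1-e1)*x = 0 := by rw [sub_mul, one_mul, h1', sub_self]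
  exact ⟨h1', h2', h3', h4'⟩

lemma mem21_facts' (hAlt1 : ∀ x y : R, x * x * y = x * (x * y))
    (hAlt2 : ∀ x y : R, y * x * x = y * (x * x))
    (e1 : R) (he : e1 * e1 = e1) (x r : R) (hx : x = (1 - e1) * r * e1) :
    (1-e1)*x = x ∧ x*e1 = x ∧ x*(1-e1) = 0 ∧ e1*x = 0 := by
  have he2e1 : (1-e1)*e1 = 0 := by rw [sub_mul, one_mul, he, sub_self]
  have he2 : (1-e1)*(1-e1) = 1 - e1 := by rw [mul_sub, mul_one, he2e1, sub_zero]
  have h := mem12_facts' hAlt1 hAlt2 (1-e1) he2 x r (by rw [sub_sub_cancel]; exact hx)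
  rw [sub_sub_cancel] at h
  exact ⟨h.1, h.2.1, h.2.2.1, h.2.2.2⟩

lemma R11_facts' (hAlt1 : ∀ x y : R, x * x * y = x * (x * y))
    (hAlt2 : ∀ x y : R, y * x * x = y * (x * x)) (e1 x y : R)
    (hx1 : e1*x = x) (hx2 : x*(1-e1) = x) (hx3 : x*e1 = 0) (hx4 : (1-e1)*x = 0)
    (hy1 : (1-e1)*y = y) (hy2 : y*e1 = y) (hy3 : y*(1-e1) = 0) (hy4 : e1*y = 0) :
    e1*(x*y) = x*y ∧ (x*y)*e1 = x*y ∧ (1-e1)*(x*y) = 0 ∧ (x*y)*(1-e1) = 0 := by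
  have A := lin1' hAlt1 e1 x y
  rw [hx1, hx3, hy4] at A
  simp only [zero_mul, mul_zero, add_zero] at A
  have r1 : e1*(x*y) = x*y := A.symm
  have B := lin2' hAlt2 x y (1-e1)
  rw [hx2, hy3, hy1] at B
  simp only [mul_zero, zero_add] at B
  have r4 : (x*y)*(1-e1) = 0 := by linear_combination (norm := abel1) B
  have r2 : (x*y)*e1 = x*y := by
    have h := r4
    rw [mul_sub, mul_one] at h
    linear_combination (norm := abel1) -h
  have r3 : (1-e1)*(x*y) = 0 := by rw [sub_mul, one_mul, r1, sub_self]
  exact ⟨r1, r2, r3, r4⟩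

lemma R22_facts' (hAlt1 : ∀ x y : R, x * x * y = x * (x * y))
    (hAlt2 : ∀ x y : R, y * x * x = y * (x * x)) (e1 x y : R)
    (hx1 : (1-e1)*x = x) (hx2 : x*e1 = x) (hx3 : x*(1-e1) = 0) (hx4 : e1*x = 0)
    (hy1 : e1*y = y) (hy2 : y*(1-e1) = y) (hy3 : y*e1 = 0) (hy4 : (1-e1)*y = 0) :
    (1-e1)*(x*y) = x*y ∧ (x*y)*(1-e1) = x*y ∧ e1*(x*y) = 0 ∧ (x*y)*e1 = 0 := by
  have A := lin2' hAlt2 x y e1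
  rw [hx2, hy3, hy1] at A
  simp only [mul_zero, zero_add] at A
  have r4 : (x*y)*e1 = 0 := by linear_combination (norm := abel1) A
  have B := lin1' hAlt1 (1-e1) x y
  rw [hx1, hx3, hy4] at B
  simp only [zero_mul, mul_zero, add_zero] at B
  have r1 : (1-e1)*(x*y) = x*y := B.symm
  have r2 : (x*y)*(1-e1) = x*y := by rw [mul_sub, mul_one, r4, sub_zero]
  have r3 : e1*(x*y) = 0 := by
    have hsplit : e1*(x*y) + (1-e1)*(x*y) = x*y := by
      rw [← add_mul, show e1 + (1 - e1) = (1:R) from by abel, one_mul]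
    linear_combination (norm := abel1) hsplit - r1
  exact ⟨r1, r2, r3, r4⟩

lemma R12_mul_R11' (hAlt2 : ∀ x y : R, y * x * x = y * (x * x))
    (h2 : ∀ x : R, (2 : ℕ) • x = 0 → x = 0)
    (e1 : R) (he : e1 * e1 = e1) (x z : R)
    (hx3 : x*e1 = 0) (hz1 : e1*z = z) (hz2 : z*e1 = z) : x*z = 0 := by
  have A := lin2' hAlt2 x z e1
  rw [hx3, hz2, hz1] at A
  simp only [zero_mul, add_zero] at A
  have B := hAlt2 e1 (x*z)
  rw [he, A] at B
  rw [add_mul, A] at B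
  have hww : x*z + x*z = 0 := by linear_combination (norm := abel1) B
  exact two_cancel' h2 _ hww

lemma R22_mul_R12' (hAlt1 : ∀ x y : R, x * x * y = x * (x * y))
    (h2 : ∀ x : R, (2 : ℕ) • x = 0 → x = 0)
    (e1 : R) (he : e1 * e1 = e1) (z x : R)
    (hz4 : e1*z = 0) (hz5 : z*e1 = 0) (hx1 : e1*x = x) : z*x = 0 := by
  have A := lin1' hAlt1 e1 z x
  rw [hz4, hz5, hx1] at A
  simp only [zero_mul, zero_add] at A
  have h1 : e1 * (z*x) = -(z*x) := by linear_combination (norm := abel1) -A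
  have B := hAlt1 e1 (z*x)
  rw [he, h1, mul_neg, h1, neg_neg] at B
  have hww : z*x + z*x = 0 := by linear_combination (norm := abel1) -B
  exact two_cancel' h2 _ hww

lemma claimC' (e1 : R) (D : R → R)
    (hD : ∀ x y : R, D (x * y - y * x) =
      (D x * y - y * D x) + (x * D y - D y * x))
    (x : R)
    (hx1 : e1*x = x) (hx2 : x*(1-e1) = x) (hx3 : x*e1 = 0) (hx4 : (1-e1)*x = 0)
    (hsq : x*x = 0)
    (hdx1 : e1*D x = D x) (hdx2 : D x*(1-e1) = D x) (hdx3 : D x*e1 = 0)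
    (hdx4 : (1-e1)*D x = 0)
    (he1e2 : e1*(1-e1) = 0) (he2e1 : (1-e1)*e1 = 0)
    (hD0 : D 0 = 0) :
    D (x + x) = D x + D x := by
  have ht1 := hD e1 x
  have harg1 : e1*x - x*e1 = x := by rw [hx1, hx3, sub_zero]
  rw [harg1, hdx1, hdx3] at ht1
  have ht2 := hD x (1 - e1)
  have harg2 : x*(1-e1) - (1-e1)*x = x := by rw [hx2, hx4, sub_zero]
  rw [harg2, hdx2, hdx4] at ht2
  have ht3 := hD e1 (1 - e1)
  have harg3 : e1*(1-e1) - (1-e1)*e1 = 0 := by rw [he1e2, he2e1, sub_zero]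
  rw [harg3, hD0] at ht3
  have ht4 := hD (e1 + x) x
  have harg4 : (e1 + x)*x - x*(e1 + x) = x := by
    rw [add_mul, mul_add, hx1, hx3, hsq]; abel
  rw [harg4] at ht4
  simp only [mul_add, add_mul] at ht4
  rw [hdx1, hdx3] at ht4
  have ht5 := hD x (1 - e1 + x)
  have harg5 : x*(1 - e1 + x) - (1 - e1 + x)*x = x := by
    rw [mul_add, add_mul, hx2, hx4, hsq]; abel
  rw [harg5] at ht5
  simp only [mul_add, add_mul] at ht5
  rw [hdx2, hdx4] at ht5
  have ht6 := hD (e1 + x) (1 - e1)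
  have harg6 : (e1 + x)*(1-e1) - (1-e1)*(e1 + x) = x := by
    rw [add_mul, mul_add, he1e2, hx2, he2e1, hx4]; abel
  rw [harg6] at ht6
  simp only [mul_add, add_mul] at ht6
  have ht7 := hD e1 (1 - e1 + x)
  have harg7 : e1*(1 - e1 + x) - (1 - e1 + x)*e1 = x := by
    rw [mul_add, add_mul, he1e2, hx1, he2e1, hx3]; abel
  rw [harg7] at ht7
  simp only [mul_add, add_mul] at ht7
  have ht8 := hD (e1 + x) (1 - e1 + x)
  have harg8 : (e1 + x)*(1 - e1 + x) - (1 - e1 + x)*(e1 + x) = x + x := by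
    simp only [mul_add, add_mul]
    rw [he1e2, he2e1, hx1, hx2, hx3, hx4, hsq]; abel
  rw [harg8] at ht8
  simp only [mul_add, add_mul] at ht8
  linear_combination (norm := abel1) ht8 - ht6 - ht7 - ht4 - ht5 + ht1 + ht2 + ht3

end Aux

/-- D(a12 (b21 a12)) = D(a12)(b21 a12) + a12 D(b21) a12 + a12 (b21 D(a12)). -/
theorem D_triple_identity (R : Type*) [NonAssocRing R]
    (hAlt1 : ∀ x y : R, x * x * y = x * (x * y))
    (hAlt2 : ∀ x y : R, y * x * x = y * (x * x))
    (h2 : ∀ x : R, (2 : ℕ) • x = 0 → x = 0)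
    (e1 : R) (he : e1 * e1 = e1) (he0 : e1 ≠ 0) (he1 : e1 ≠ 1)
    (D : R → R)
    (hD : ∀ x y : R, D (x * y - y * x) =
      (D x * y - y * D x) + (x * D y - D y * x))
    (hD12 : ∀ x : R, InP e1 0 1 x → InP e1 0 1 (D x))
    (hD21 : ∀ x : R, InP e1 1 0 x → InP e1 1 0 (D x)) :
    ∀ a b : R, InP e1 0 1 a → InP e1 1 0 b →
      D (a * (b * a)) = D a * (b * a) + (a * D b) * a + a * (b * D a) := by
  intro a b ha hb
  have hDaP := hD12 a ha
  have hDbP := hD21 b hb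
  simp only [InP, pe, Matrix.cons_val_zero, Matrix.cons_val_one, Matrix.head_cons]
    at ha hb hDaP hDbP
  obtain ⟨ra, hra⟩ := ha
  obtain ⟨rb, hrb⟩ := hb
  obtain ⟨sa, hsa⟩ := hDaP
  obtain ⟨sb, hsb⟩ := hDbP
  obtain ⟨ea1, ea2, ea3, ea4⟩ := mem12_facts' hAlt1 hAlt2 e1 he a ra hra
  obtain ⟨eb1, eb2, eb3, eb4⟩ := mem21_facts' hAlt1 hAlt2 e1 he b rb hrb
  obtain ⟨eda1, eda2, eda3, eda4⟩ := mem12_facts' hAlt1 hAlt2 e1 he (D a) sa hsa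
  obtain ⟨edb1, edb2, edb3, edb4⟩ := mem21_facts' hAlt1 hAlt2 e1 he (D b) sb hsb
  have he1e2 : e1*(1-e1) = 0 := by rw [mul_sub, mul_one, he, sub_self]
  have he2e1 : (1-e1)*e1 = 0 := by rw [sub_mul, one_mul, he, sub_self]
  have hD0 : D 0 = 0 := by have h := hD 0 0; simpa using h
  have hsqa : a * a = 0 := by
    have l := flex' hAlt1 hAlt2 a e1
    rw [ea3, zero_mul, ea1] at l
    exact l.symm
  -- Peirce components of products
  obtain ⟨hab1, hab2, hab3, hab4⟩ :=
    R11_facts' hAlt1 hAlt2 e1 a b ea1 ea2 ea3 ea4 eb1 eb2 eb3 eb4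
  obtain ⟨hdab1, hdab2, hdab3, hdab4⟩ :=
    R11_facts' hAlt1 hAlt2 e1 (D a) b eda1 eda2 eda3 eda4 eb1 eb2 eb3 eb4
  obtain ⟨hba1, hba2, hba3, hba4⟩ :=
    R22_facts' hAlt1 hAlt2 e1 b a eb1 eb2 eb3 eb4 ea1 ea2 ea3 ea4
  obtain ⟨hbda1, hbda2, hbda3, hbda4⟩ :=
    R22_facts' hAlt1 hAlt2 e1 b (D a) eb1 eb2 eb3 eb4 eda1 eda2 eda3 eda4
  -- zero products
  have hz1 : b * D a * a = 0 := R22_mul_R12' hAlt1 h2 e1 he (b * D a) a hbda3 hbda4 ea1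
  have hz2 : D b * a * a = 0 := by rw [hAlt2 a (D b), hsqa, mul_zero]
  have hz3 : a * (D a * b) = 0 := R12_mul_R11' hAlt2 h2 e1 he a (D a * b) ea3 hdab1 hdab2
  have hz4 : a * (a * D b) = 0 := by rw [← hAlt1 a (D b), hsqa, zero_mul]
  have hz5 : b * a * D a = 0 := R22_mul_R12' hAlt1 h2 e1 he (b * a) (D a) hba3 hba4 eda1
  have hz6 : D a * (a * b) = 0 := R12_mul_R11' hAlt2 h2 e1 he (D a) (a * b) eda3 hab1 hab2
  have hz7 : b * a * a = 0 := by rw [hAlt2 a b, hsqa, mul_zero]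
  have hz8 : a * (a * b) = 0 := by rw [← hAlt1 a b, hsqa, zero_mul]
  have flexab : a * b * a = a * (b * a) := flex' hAlt1 hAlt2 a b
  have flexADb : a * D b * a = a * (D b * a) := flex' hAlt1 hAlt2 a (D b)
  have houter : D a * b * a + a * b * D a = D a * (b * a) + a * (b * D a) :=
    outer' hAlt1 hAlt2 (D a) b a
  -- Step B : D (c + c) = T + T
  have harg : (a*b - b*a) * a - a * (a*b - b*a) = a*(b*a) + a*(b*a) := by
    rw [sub_mul, mul_sub, hz7, hz8, flexab]; abel
  have hB := hD (a*b - b*a) a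
  rw [harg, hD a b] at hB
  simp only [add_mul, sub_mul, mul_add, mul_sub] at hB
  have hstep : D (a*(b*a) + a*(b*a)) =
      (D a * (b * a) + a * D b * a + a * (b * D a)) +
      (D a * (b * a) + a * D b * a + a * (b * D a)) := by
    linear_combination (norm := abel1) hB + houter - flexADb - hz1 - hz2 - hz3 - hz4 - hz5 - hz6
  -- c = a*(b*a) is in R12
  have hc1 : e1 * (a * (b * a)) = a * (b * a) := by
    have l := lin1' hAlt1 e1 a (b*a)
    rw [ea1, ea3, hba3] at l
    simp only [zero_mul, mul_zero, add_zero] at l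
    exact l.symm
  have hc2 : (a * (b * a)) * (1 - e1) = a * (b * a) := by
    have l := lin2' hAlt2 a (b*a) (1-e1)
    rw [ea2, hba2, hba1] at l
    exact add_right_cancel l
  have hc3 : (a * (b * a)) * e1 = 0 := by
    have l := hc2
    rw [mul_sub, mul_one] at l
    linear_combination (norm := abel1) -l
  have hc4 : (1 - e1) * (a * (b * a)) = 0 := by rw [sub_mul, one_mul, hc1, sub_self]
  have hsqc : (a * (b * a)) * (a * (b * a)) = 0 := by
    have l := flex' hAlt1 hAlt2 (a * (b * a)) e1
    rw [hc3, hc1, zero_mul] at l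
    exact l.symm
  have hcInP : InP e1 0 1 (a * (b * a)) := by
    simp only [InP, pe, Matrix.cons_val_zero, Matrix.cons_val_one, Matrix.head_cons]
    exact ⟨a * (b * a), by rw [hc1, hc2]⟩
  have hDcP := hD12 (a * (b * a)) hcInP
  simp only [InP, pe, Matrix.cons_val_zero, Matrix.cons_val_one, Matrix.head_cons] at hDcP
  obtain ⟨sc, hsc⟩ := hDcP
  obtain ⟨edc1, edc2, edc3, edc4⟩ := mem12_facts' hAlt1 hAlt2 e1 he (D (a * (b * a))) sc hsc
  -- Claim C : doubling
  have hkey := claimC' e1 D hD (a * (b * a)) hc1 hc2 hc3 hc4 hsqc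
    edc1 edc2 edc3 edc4 he1e2 he2e1 hD0
  have hsum := hkey.symm.trans hstep
  have hw : (D (a*(b*a)) - (D a * (b * a) + a * D b * a + a * (b * D a))) +
      (D (a*(b*a)) - (D a * (b * a) + a * D b * a + a * (b * D a))) = 0 := by
    linear_combination (norm := abel1) hsum
  have hfin := two_cancel' h2 _ hw
  exact sub_eq_zero.mp hfin
end
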